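/- arXiv:1505.01708 — 2 statements merged into one kernel-verified Lean document; each statement's English description precedes it below -/
import Mathlib

section
/- Fix N ≥ 1 and r ≥ 0. Let H̃ be the N×N matrix with H̃_{ij} = (−1)^N(ψ_{i+j−N}(2r²) − ψ_{i+j−N+1}(2r²)) (ψ_n ≡ 0 for n < 0), let v ∈ ℝ^N have entries v_i = 2(−1)^i, and define (R₂)_j = ∫_0^{2r²} ψ_j(u) du. Then ((I − H̃)v)_i = (R₂)_i for all i ∈ {0,…,N−1}. -/
open MeasureTheory

/-- The `k`-th (normalized) Laguerre polynomial. -/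
noncomputable def Lag (k : ℕ) (x : ℝ) : ℝ :=
  ∑ l ∈ Finset.range (k + 1), (k.choose l : ℝ) * (-1) ^ l / (Nat.factorial l) * x ^ l

/-- The Laguerre function `ψ_n(x) = e^{-x/2} L_n(x)` for `n ≥ 0`,
extended by `ψ_n ≡ 0` for `n < 0`. -/
noncomputable def psiZ (n : ℤ) (x : ℝ) : ℝ :=
  if 0 ≤ n then Real.exp (-x / 2) * Lag n.toNat x else 0

/-- The Laguerre function with natural index. -/
noncomputable def psiL (n : ℕ) (x : ℝ) : ℝ := Real.exp (-x / 2) * Lag n x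

/-- The matrix `H̃`, with `H̃_{ij} = (-1)^N (ψ_{i+j-N}(2r²) - ψ_{i+j-N+1}(2r²))`. -/
noncomputable def Ht (N : ℕ) (r : ℝ) : Matrix (Fin N) (Fin N) ℝ :=
  fun i j => (-1) ^ N *
    (psiZ ((i : ℤ) + (j : ℤ) - (N : ℤ)) (2 * r ^ 2) -
     psiZ ((i : ℤ) + (j : ℤ) - (N : ℤ) + 1) (2 * r ^ 2))

/-- The matrix `Q`: `-2r` on the diagonal, `-4r` below it, `0` above it. -/
noncomputable def Qm (N : ℕ) (r : ℝ) : Matrix (Fin N) (Fin N) ℝ :=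
  fun i j => if (i : ℕ) = (j : ℕ) then -2 * r
    else if (j : ℕ) < (i : ℕ) then -4 * r else 0

/-- The constant vector `u` with all entries `(-1)^{N-1}`. -/
noncomputable def uVec (N : ℕ) : Fin N → ℝ := fun _ => (-1) ^ (N - 1)

/-- The alternating vector `v` with entries `v_i = 2(-1)^i`. -/
noncomputable def vVec (N : ℕ) : Fin N → ℝ := fun i => 2 * (-1) ^ (i : ℕ)

noncomputable def Psi (n : ℕ) (s : ℝ) : ℝ := ∫ x in (0:ℝ)..s, psiL n x

lemma lag_zero (k : ℕ) : Lag k 0 = 1 := by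
  unfold Lag
  rw [Finset.sum_eq_single 0]
  · simp
  · intro l _ hl; simp [zero_pow hl]
  · simp

lemma psiZ_neg {n : ℤ} (h : n < 0) (x : ℝ) : psiZ n x = 0 := by
  simp [psiZ, not_le.mpr h]

lemma psiZ_coe (m : ℕ) (x : ℝ) : psiZ (m : ℤ) x = psiL m x := by
  simp [psiZ, psiL]

lemma lag_continuous (k : ℕ) : Continuous (Lag k) := by
  unfold Lag; fun_prop

lemma psiL_continuous (n : ℕ) : Continuous (psiL n) := by
  unfold psiL
  exact (Real.continuous_exp.comp (by fun_prop)).mul (lag_continuous n)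

noncomputable def LagD (k : ℕ) (x : ℝ) : ℝ :=
  ∑ l ∈ Finset.range (k + 1),
    (k.choose l : ℝ) * (-1) ^ l / (Nat.factorial l) * (l * x ^ (l - 1))

lemma lag_hasDerivAt (k : ℕ) (x : ℝ) : HasDerivAt (Lag k) (LagD k x) x := by
  unfold Lag LagD
  apply HasDerivAt.fun_sum
  intro l _
  simpa using (hasDerivAt_pow l x).const_mul ((k.choose l : ℝ) * (-1) ^ l / (Nat.factorial l))

lemma lagD_succ (k : ℕ) (x : ℝ) : LagD (k + 1) x = LagD k x - Lag k x := by
  have hL : LagD (k+1) x = ∑ m ∈ Finset.range (k+1),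
      ((k+1).choose (m+1) : ℝ) * (-1) ^ (m+1) / (Nat.factorial (m+1)) * ((m+1) * x ^ m) := by
    rw [LagD, Finset.sum_range_succ']
    simp
  have hR : LagD k x = ∑ m ∈ Finset.range (k+1),
      (k.choose (m+1) : ℝ) * (-1) ^ (m+1) / (Nat.factorial (m+1)) * ((m+1) * x ^ m) := by
    rw [LagD, Finset.sum_range_succ', Finset.sum_range_succ (n := k)]
    simp [Nat.choose_succ_self]
  rw [hL, hR, Lag, ← Finset.sum_sub_distrib]
  apply Finset.sum_congr rfl
  intro m _
  have hpas : ((k+1).choose (m+1) : ℝ) = (k.choose m : ℝ) + (k.choose (m+1) : ℝ) := by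
    rw [← Nat.cast_add, Nat.choose_succ_succ]
  have hfac : ((m+1).factorial : ℝ) = ((m:ℝ)+1) * (m.factorial : ℝ) := by
    rw [Nat.factorial_succ]; push_cast; ring
  have h1 : ((m.factorial : ℝ)) ≠ 0 := Nat.cast_ne_zero.mpr (Nat.factorial_ne_zero m)
  have h2 : ((m:ℝ) + 1) ≠ 0 := by positivity
  rw [hpas, hfac]
  field_simp
  ring

lemma psi_diff_hasDerivAt (n : ℕ) (x : ℝ) :
    HasDerivAt (fun y => psiL n y - psiL (n+1) y) ((psiL n x + psiL (n+1) x) / 2) x := by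
  have he : HasDerivAt (fun y : ℝ => Real.exp (-y / 2)) (Real.exp (-x/2) * (-1/2)) x := by
    have h0 : HasDerivAt (fun y : ℝ => -y / 2) (-1/2 : ℝ) x := by
      simpa using ((hasDerivAt_id x).neg.div_const 2)
    exact h0.exp
  have h1 := (he.mul (lag_hasDerivAt n x))
  have h2 := (he.mul (lag_hasDerivAt (n+1) x))
  have h := h1.sub h2
  have : (fun y => psiL n y - psiL (n+1) y)
      = fun y => Real.exp (-y/2) * Lag n y - Real.exp (-y/2) * Lag (n+1) y := rfl
  rw [this]
  refine h.congr_deriv ?_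
  rw [lagD_succ]
  simp only [psiL]
  ring

lemma psi_pair (n : ℕ) (s : ℝ) :
    psiL n s - psiL (n+1) s = (Psi n s + Psi (n+1) s) / 2 := by
  have hint : ∀ m : ℕ, IntervalIntegrable (psiL m) volume 0 s :=
    fun m => (psiL_continuous m).intervalIntegrable 0 s
  have h := intervalIntegral.integral_eq_sub_of_hasDerivAt
    (f := fun y => psiL n y - psiL (n+1) y)
    (f' := fun x => (psiL n x + psiL (n+1) x) / 2)
    (fun x _ => psi_diff_hasDerivAt n x)
    (((((psiL_continuous n).add (psiL_continuous (n+1))).div_const 2).intervalIntegrable 0 s))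
  beta_reduce at h
  have h0 : psiL n 0 - psiL (n+1) 0 = 0 := by simp [psiL, lag_zero]
  rw [h0, sub_zero] at h
  rw [← h]
  rw [intervalIntegral.integral_div, intervalIntegral.integral_add (hint n) (hint (n+1))]
  rfl

lemma Psi_zero (s : ℝ) : Psi 0 s = 2 - 2 * psiL 0 s := by
  have hd : ∀ x : ℝ, HasDerivAt (fun y : ℝ => -2 * Real.exp (-y/2)) (psiL 0 x) x := by
    intro x
    have h0 : HasDerivAt (fun y : ℝ => -y / 2) (-1/2 : ℝ) x := by
      simpa using ((hasDerivAt_id x).neg.div_const 2)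
    have := (h0.exp.const_mul (-2 : ℝ))
    refine this.congr_deriv ?_
    simp [psiL, Lag]
    ring
  have h := intervalIntegral.integral_eq_sub_of_hasDerivAt (fun x _ => hd x)
    ((psiL_continuous 0).intervalIntegrable 0 s)
  unfold Psi
  rw [h]
  simp [psiL, lag_zero, Lag]
  ring

theorem stmt11 (N : ℕ) (hN : 1 ≤ N) (r : ℝ) (hr : 0 ≤ r) (i : Fin N) :
    ((1 - Ht N r).mulVec (vVec N)) i = ∫ x in (0 : ℝ)..(2 * r ^ 2), psiL (i : ℕ) x := by
  set s : ℝ := 2 * r ^ 2 with hsdef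
  have hiN : (i : ℕ) < N := i.isLt
  show _ = Psi (i : ℕ) s
  rw [Matrix.sub_mulVec, Matrix.one_mulVec]
  simp only [Pi.sub_apply]
  have hmv : (Ht N r).mulVec (vVec N) i
      = 2 * (-1:ℝ)^(i:ℕ) * psiL 0 s + ((-1:ℝ)^(i:ℕ) * Psi 0 s - Psi (i:ℕ) s) := by
    have h1 : (Ht N r).mulVec (vVec N) i
        = ∑ j ∈ Finset.range N, (-1:ℝ)^N *
            (psiZ ((i:ℤ) + j - N) s - psiZ ((i:ℤ) + j - N + 1) s) * (2 * (-1:ℝ)^j) := by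
      rw [← Fin.sum_univ_eq_sum_range]
      rfl
    have h2 : ∀ j ∈ Finset.range N, (-1:ℝ)^N *
            (psiZ ((i:ℤ) + (N-1-j : ℕ) - N) s - psiZ ((i:ℤ) + (N-1-j : ℕ) - N + 1) s)
            * (2 * (-1:ℝ)^(N-1-j : ℕ))
        = -2 * (-1:ℝ)^j * (psiZ ((i:ℤ) - 1 - j) s - psiZ ((i:ℤ) - j) s) := by
      intro j hj
      rw [Finset.mem_range] at hj
      have hc1 : (i:ℤ) + ((N-1-j : ℕ) : ℤ) - N = (i:ℤ) - 1 - j := by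
        have : ((N-1-j : ℕ) : ℤ) = (N:ℤ) - 1 - j := by
          push_cast [Nat.cast_sub (by omega : j ≤ N - 1), Nat.cast_sub (by omega : 1 ≤ N)]
          ring
        rw [this]; ring
      have hc2 : (i:ℤ) + ((N-1-j : ℕ) : ℤ) - N + 1 = (i:ℤ) - j := by omega
      rw [hc2, hc1]
      have hsign : (-1:ℝ)^N * (-1:ℝ)^(N-1-j : ℕ) = -(-1:ℝ)^j := by
        set a := N - 1 - j with ha
        have h2 : (-1:ℝ)^a * (-1:ℝ)^a = 1 := by
          rw [← pow_add, ← two_mul, pow_mul]; norm_num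
        calc (-1:ℝ)^N * (-1:ℝ)^a = (-1:ℝ)^(a+(j+1)) * (-1:ℝ)^a := by
              rw [show N = a + (j+1) by omega]
          _ = ((-1:ℝ)^a * (-1:ℝ)^a) * (-1:ℝ)^(j+1) := by rw [pow_add]; ring
          _ = -(-1:ℝ)^j := by rw [h2]; ring
      calc (-1:ℝ)^N * (psiZ ((i:ℤ)-1-j) s - psiZ ((i:ℤ)-j) s) * (2 * (-1:ℝ)^(N-1-j : ℕ))
          = ((-1:ℝ)^N * (-1:ℝ)^(N-1-j : ℕ)) * 2 * (psiZ ((i:ℤ)-1-j) s - psiZ ((i:ℤ)-j) s) := by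
            ring
        _ = -2 * (-1:ℝ)^j * (psiZ ((i:ℤ) - 1 - j) s - psiZ ((i:ℤ) - j) s) := by
            rw [hsign]; ring
    have h3 : (Ht N r).mulVec (vVec N) i
        = ∑ j ∈ Finset.range N, -2 * (-1:ℝ)^j * (psiZ ((i:ℤ) - 1 - j) s - psiZ ((i:ℤ) - j) s) := by
      rw [h1, ← Finset.sum_range_reflect]
      exact Finset.sum_congr rfl h2
    -- shrink to range (i+1)
    have h4 : ∑ j ∈ Finset.range N, -2 * (-1:ℝ)^j * (psiZ ((i:ℤ)-1-j) s - psiZ ((i:ℤ)-j) s)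
        = ∑ j ∈ Finset.range ((i:ℕ)+1), -2 * (-1:ℝ)^j * (psiZ ((i:ℤ)-1-j) s - psiZ ((i:ℤ)-j) s) := by
      symm
      apply Finset.sum_subset (Finset.range_subset_range.mpr (by omega))
      intro j _ hj
      rw [Finset.mem_range, not_lt] at hj
      rw [psiZ_neg (by omega), psiZ_neg (by omega)]
      ring
    rw [h3, h4, Finset.sum_range_succ]
    have h5 : ∑ j ∈ Finset.range (i:ℕ), -2 * (-1:ℝ)^j * (psiZ ((i:ℤ)-1-j) s - psiZ ((i:ℤ)-j) s)
        = ∑ j ∈ Finset.range (i:ℕ),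
            ((-1:ℝ)^(j+1) * Psi ((i:ℕ) - j) s - (-1:ℝ)^(j+1+1) * Psi ((i:ℕ) - (j+1)) s) := by
      apply Finset.sum_congr rfl
      intro j hj
      rw [Finset.mem_range] at hj
      have e1 : (i:ℤ) - 1 - j = (((i:ℕ) - 1 - j : ℕ) : ℤ) := by omega
      have e2 : (i:ℤ) - j = ((((i:ℕ) - 1 - j) + 1 : ℕ) : ℤ) := by omega
      rw [e1, e2, psiZ_coe, psiZ_coe, psi_pair]
      have e3 : (i:ℕ) - j = ((i:ℕ) - 1 - j) + 1 := by omega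
      have e4 : (i:ℕ) - (j+1) = (i:ℕ) - 1 - j := by omega
      rw [e3, e4]
      ring
    rw [h5, Finset.sum_range_sub']
    have hTi : -2 * (-1:ℝ)^(i:ℕ) * (psiZ ((i:ℤ)-1-(i:ℕ)) s - psiZ ((i:ℤ)-(i:ℕ)) s)
        = 2 * (-1:ℝ)^(i:ℕ) * psiL 0 s := by
      rw [psiZ_neg (by omega), show (i:ℤ)-(i:ℕ) = ((0:ℕ):ℤ) by omega, psiZ_coe]
      ring
    rw [hTi]
    simp only [Nat.sub_zero, Nat.sub_self]
    ring
  rw [hmv, Psi_zero]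
  simp only [vVec]
  ring
end

section
/- Fix N ≥ 1 and view H̃ = H̃(r) as a matrix-valued function of r, with H̃_{ij} = (−1)^N(ψ_{i+j−N}(2r²) − ψ_{i+j−N+1}(2r²)) (ψ_n ≡ 0 for n < 0). Define Q by Q_{ij} = −2r if i = j, −4r if i > j, and 0 if i < j. Then dH̃/dr = Q·H̃, i.e. for all i,j: ∂_r H̃_{ij} = (−1)^N · 2r · (ψ_{i+j−N}(2r²) + ψ_{i+j−N+1}(2r²)). -/
open MeasureTheory

/-! `L_n − L_{n+1} = ∑_l C(n,l) (−1)^l x^{l+1}/(l+1)!` is an antiderivative of `L_n`, so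
`(ψ_n − ψ_{n+1})' = (ψ_n + ψ_{n+1})/2`, also for negative `n`; the chain rule through `x = 2r²`
then gives `∂_r H̃_{ij}`. On the other side, `(Q H̃)_{ij}` is `−2r H̃_{ij}` minus `4r` times the
entries of column `j` above row `i`; these telescope along the anti-diagonals to
`−(−1)^N ψ_{i+j−N}`, because `ψ_{j−N} = 0`. -/

theorem Lag_eq_sum_range {n m : ℕ} (h : n ≤ m) (x : ℝ) :
    Lag n x = ∑ l ∈ Finset.range (m + 1), (n.choose l : ℝ) * (-1) ^ l / l.factorial * x ^ l := by
  refine Finset.sum_subset (by gcongr) fun l _ hl => ?_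
  rw [Nat.choose_eq_zero_of_lt (by simpa using hl)]
  simp

theorem Lag_sub_Lag_succ (n : ℕ) (x : ℝ) :
    Lag n x - Lag (n + 1) x =
      ∑ l ∈ Finset.range (n + 1), (n.choose l : ℝ) * (-1) ^ l / (l + 1).factorial * x ^ (l + 1) := by
  rw [Lag_eq_sum_range n.le_succ, Lag, Finset.sum_range_succ', Finset.sum_range_succ' _ (n + 1),
    Nat.choose_zero_right, Nat.choose_zero_right, add_sub_add_right_eq_sub, ← Finset.sum_sub_distrib]
  refine Finset.sum_congr rfl fun l _ => ?_
  rw [Nat.choose_succ_succ']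
  push_cast
  ring

theorem hasDerivAt_Lag_sub_Lag_succ (n : ℕ) (x : ℝ) :
    HasDerivAt (fun y => Lag n y - Lag (n + 1) y) (Lag n x) x := by
  simp_rw [Lag_sub_Lag_succ]
  refine (HasDerivAt.fun_sum fun l _ => (hasDerivAt_pow (l + 1) x).const_mul
    ((n.choose l : ℝ) * (-1) ^ l / (l + 1).factorial)).congr_deriv ?_
  refine Finset.sum_congr rfl fun l _ => ?_
  rw [Nat.factorial_succ]
  push_cast
  field_simp

noncomputable def lagZ (n : ℤ) (x : ℝ) : ℝ := if 0 ≤ n then Lag n.toNat x else 0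

theorem psiZ_eq_exp_mul_lagZ (n : ℤ) (x : ℝ) : psiZ n x = Real.exp (-x / 2) * lagZ n x := by
  unfold psiZ lagZ
  split_ifs <;> simp

theorem lagZ_natCast (k : ℕ) : lagZ k = Lag k := by
  ext
  simp [lagZ]

theorem lagZ_of_neg {n : ℤ} (hn : n < 0) : lagZ n = 0 := by
  ext
  simp [lagZ, hn.not_ge]

theorem hasDerivAt_lagZ_sub_lagZ_succ (n : ℤ) (x : ℝ) :
    HasDerivAt (fun y => lagZ n y - lagZ (n + 1) y) (lagZ n x) x := by
  rcases n with k | _ | k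
  · rw [Int.ofNat_eq_natCast, ← Nat.cast_add_one, lagZ_natCast, lagZ_natCast]
    exact hasDerivAt_Lag_sub_Lag_succ k x
  · rw [show Int.negSucc 0 + 1 = ((0 : ℕ) : ℤ) from rfl, lagZ_natCast,
      lagZ_of_neg (Int.negSucc_lt_zero 0)]
    simpa [Lag] using hasDerivAt_const x (-1 : ℝ)
  · rw [lagZ_of_neg (Int.negSucc_lt_zero _), lagZ_of_neg (by omega)]
    simpa using hasDerivAt_const x (0 : ℝ)

theorem hasDerivAt_psiZ_sub_psiZ_succ (n : ℤ) (x : ℝ) :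
    HasDerivAt (fun y => psiZ n y - psiZ (n + 1) y) ((psiZ n x + psiZ (n + 1) x) / 2) x := by
  simp_rw [psiZ_eq_exp_mul_lagZ, ← mul_sub]
  refine (((hasDerivAt_neg x).div_const 2).exp.mul (hasDerivAt_lagZ_sub_lagZ_succ n x)).congr_deriv ?_
  ring

theorem hasDerivAt_Ht_apply (N : ℕ) (r : ℝ) (i j : Fin N) :
    HasDerivAt (fun s : ℝ => Ht N s i j)
      ((-1) ^ N * (2 * r) *
        (psiZ ((i : ℤ) + (j : ℤ) - (N : ℤ)) (2 * r ^ 2) +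
         psiZ ((i : ℤ) + (j : ℤ) - (N : ℤ) + 1) (2 * r ^ 2))) r := by
  have hsq : HasDerivAt (fun s : ℝ => 2 * s ^ 2) (2 * (2 * r)) r := by
    simpa using (hasDerivAt_pow 2 r).const_mul (2 : ℝ)
  refine (((hasDerivAt_psiZ_sub_psiZ_succ _ _).comp r hsq).const_mul _).congr_deriv ?_
  ring

theorem Qm_mul_apply (N : ℕ) (r : ℝ) (A : Matrix (Fin N) (Fin N) ℝ) (i j : Fin N) :
    (Qm N r * A) i j = -2 * r * A i j - 4 * r * ∑ k ∈ Finset.Iio i, A k j := by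
  have hQ : ∀ k, Qm N r i k = -2 * r * (if k = i then 1 else 0) - 4 * r * (if k < i then 1 else 0) := by
    intro k
    simp only [Qm, Fin.val_inj, Fin.lt_def]
    split_ifs <;> first | omega | ring
  simp only [Matrix.mul_apply, hQ, sub_mul, mul_assoc, Finset.sum_sub_distrib, ← Finset.mul_sum,
    ite_mul, one_mul, zero_mul, Finset.sum_ite_eq', Finset.mem_univ, if_true, ← Finset.sum_filter,
    Finset.filter_gt_eq_Iio]

theorem sum_Iio_Ht_apply (N : ℕ) (r : ℝ) (i j : Fin N) :
    ∑ k ∈ Finset.Iio i, Ht N r k j = -(-1) ^ N * psiZ ((i : ℤ) + (j : ℤ) - (N : ℤ)) (2 * r ^ 2) := by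
  set p : ℕ → ℝ := fun k => psiZ ((k : ℤ) + (j : ℤ) - (N : ℤ)) (2 * r ^ 2)
  have hp0 : p 0 = 0 := by
    simp only [p, psiZ]
    rw [if_neg (by omega)]
  calc ∑ k ∈ Finset.Iio i, Ht N r k j
      = ∑ k ∈ (Finset.Iio i).map Fin.valEmbedding, (-1) ^ N * (p k - p (k + 1)) := by
        rw [Finset.sum_map]
        refine Finset.sum_congr rfl fun k _ => ?_
        simp only [Ht, p, Fin.valEmbedding_apply]
        push_cast
        ring_nf
    _ = (-1) ^ N * (p 0 - p i) := by
        rw [Fin.map_valEmbedding_Iio, Nat.Iio_eq_range, ← Finset.mul_sum, Finset.sum_range_sub']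
    _ = _ := by
        rw [hp0]
        ring

theorem stmt12_general (N : ℕ) (r : ℝ) (i j : Fin N) :
    deriv (fun s : ℝ => Ht N s i j) r = (Qm N r * Ht N r) i j ∧
    deriv (fun s : ℝ => Ht N s i j) r
      = (-1) ^ N * (2 * r) *
          (psiZ ((i : ℤ) + (j : ℤ) - (N : ℤ)) (2 * r ^ 2) +
           psiZ ((i : ℤ) + (j : ℤ) - (N : ℤ) + 1) (2 * r ^ 2)) := by
  rw [(hasDerivAt_Ht_apply N r i j).deriv, Qm_mul_apply, sum_Iio_Ht_apply, Ht]
  exact ⟨by ring, rfl⟩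

theorem stmt12 (N : ℕ) (hN : 1 ≤ N) (r : ℝ) (i j : Fin N) :
    deriv (fun s : ℝ => Ht N s i j) r = (Qm N r * Ht N r) i j ∧
    deriv (fun s : ℝ => Ht N s i j) r
      = (-1) ^ N * (2 * r) *
          (psiZ ((i : ℤ) + (j : ℤ) - (N : ℤ)) (2 * r ^ 2) +
           psiZ ((i : ℤ) + (j : ℤ) - (N : ℤ) + 1) (2 * r ^ 2)) :=
  stmt12_general N r i j
end
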